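/- Suppose X_1,...,X_n are independent with a change-point at k: indices ≤ k from continuous law F, indices > k from continuous law G, with p = P(X_1 ≤ X_n). Let R_i be combined-sample ranks and for k < m ≤ n define T_m = Σ_{j=k+1}^{m} R_j. Then T_m admits the decomposition T_m = (m−k)(m−k+1)/2 + (m−k)(n−m) V_1 + (m−k)k V_2, where V_1 and V_2 are two-sample U-statistics with kernels that are indicators, E[V_1] = 1/2 and E[V_2] = p. -/

import Mathlib

/-!
Each rank `R_j` counts the indicators `1{X_i ≤ X_j}` over `i ∈ [1, n]`; split `i` into the
pre-change block `[1, k]`, the block `[k + 1, m]` of `j` itself and the rest `[m + 1, n]`. Without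
ties `1{X_i ≤ X_j} + 1{X_j ≤ X_i} = 1 + 1{i = j}`, so the middle block sums to the triangular
number. By independence, `E 1{X_i ≤ X_j} = (law X_i ⊗ law X_j){x ≤ y}`: this is `p` against the
pre-change block, and `1/2` against the post-change one since `G ⊗ G` is swap-invariant and,
`G` being continuous, does not charge the diagonal.
-/

open MeasureTheory ProbabilityTheory Finset

open scoped Classical in
/-- The rank of observation `j` in the combined sample `X 1, …, X n`. -/
noncomputable def combinedRank {Ω : Type*} (n : ℕ) (X : ℕ → Ω → ℝ) (j : ℕ) (ω : Ω) : ℕ :=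
  ((Finset.Icc 1 n).filter (fun i => X i ω ≤ X j ω)).card

lemma ite_le_add_ite_ge {R α : Type*} [AddMonoidWithOne R] [LinearOrder α] (a b : α) :
    ((if a ≤ b then 1 else 0) + if b ≤ a then 1 else 0 : R) = 1 + if a = b then 1 else 0 := by
  rcases lt_trichotomy a b with h | rfl | h
  · simp [h.le, h.not_ge, h.ne]
  · simp
  · simp [h.le, h.not_ge, h.ne']

theorem Finset.sum_sum_ite_le_of_injOn {ι α : Type*} [LinearOrder α] (S : Finset ι) {f : ι → α}
    (hf : Set.InjOn f S) :
    ∑ j ∈ S, ∑ i ∈ S, (if f i ≤ f j then (1 : ℝ) else 0) = #S * (#S + 1) / 2 := by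
  classical
  have hrow : ∀ j ∈ S, ∑ i ∈ S, ((if f i ≤ f j then 1 else 0) + if f j ≤ f i then 1 else 0 : ℝ)
      = #S + 1 := fun j hj => by
    simp_rw [ite_le_add_ite_ge]
    rw [sum_congr rfl fun i hi => show (1 + if f i = f j then 1 else 0 : ℝ) =
      1 + if i = j then 1 else 0 by simp only [hf.eq_iff hi hj]]
    simp [sum_add_distrib, hj]
  have hsymm := sum_congr rfl hrow
  simp only [sum_add_distrib] at hsymm
  rw [sum_comm (f := fun j i => if f j ≤ f i then (1 : ℝ) else 0)] at hsymm
  simp only [sum_const, nsmul_eq_mul] at hsymm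
  linarith

theorem Finset.sum_Icc_one_eq_add_add {M : Type*} [AddCommMonoid M] (f : ℕ → M) {k m n : ℕ}
    (hkm : k ≤ m) (hmn : m ≤ n) :
    ∑ i ∈ Icc 1 n, f i =
      ∑ i ∈ Icc 1 k, f i + ∑ i ∈ Icc (k + 1) m, f i + ∑ i ∈ Icc (m + 1) n, f i := by
  have hIoc : ∀ b, Icc 1 b = Ioc 0 b := Icc_add_one_left_eq_Ioc 0
  simp only [hIoc, Icc_add_one_left_eq_Ioc]
  rw [sum_Ioc_consecutive _ (Nat.zero_le k) hkm, sum_Ioc_consecutive _ (Nat.zero_le m) hmn]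

lemma MeasureTheory.Measure.prod_diagonal_eq_zero {α : Type*} [MeasurableSpace α]
    [MeasurableEq α] (μ ν : Measure α) [SFinite ν] [NullSingletonClass ν] :
    (μ.prod ν) (Set.diagonal α) = 0 := by
  rw [Measure.prod_apply measurableSet_diagonal]
  simp [Set.diagonal]

lemma MeasureTheory.Measure.prod_self_le_eq_half (μ : Measure ℝ) [IsProbabilityMeasure μ]
    [NullSingletonClass μ] :
    (μ.prod μ) {p | p.1 ≤ p.2} = 1 / 2 := by
  have hle : MeasurableSet {p : ℝ × ℝ | p.1 ≤ p.2} :=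
    measurableSet_le measurable_fst measurable_snd
  have hswap : (μ.prod μ) {p | p.2 ≤ p.1} = (μ.prod μ) {p | p.1 ≤ p.2} :=
    (Measure.measurePreserving_swap (μ := μ) (ν := μ)).measure_preimage hle.nullMeasurableSet
  have hunion : {p : ℝ × ℝ | p.1 ≤ p.2} ∪ {p | p.2 ≤ p.1} = Set.univ :=
    Set.eq_univ_of_forall fun p => le_total p.1 p.2
  have hinter : {p : ℝ × ℝ | p.1 ≤ p.2} ∩ {p | p.2 ≤ p.1} = Set.diagonal ℝ :=
    Set.ext fun p => (le_antisymm_iff (a := p.1) (b := p.2)).symm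
  have h := measure_union_add_inter (μ := μ.prod μ) {p : ℝ × ℝ | p.1 ≤ p.2}
    (measurableSet_le measurable_snd measurable_fst)
  rw [hunion, hinter, Measure.prod_diagonal_eq_zero, add_zero, hswap, measure_univ] at h
  rw [ENNReal.eq_div_iff two_ne_zero ENNReal.ofNat_ne_top, h, two_mul]

lemma ProbabilityTheory.IndepFun.measure_le_eq_prod_map {Ω : Type*} [MeasurableSpace Ω]
    {μ : Measure Ω} [IsFiniteMeasure μ] {X Y : Ω → ℝ} (h : IndepFun X Y μ) (hX : Measurable X)
    (hY : Measurable Y) :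
    μ {ω | X ω ≤ Y ω} = ((μ.map X).prod (μ.map Y)) {p | p.1 ≤ p.2} := by
  rw [← (indepFun_iff_map_prod_eq_prod_map_map hX.aemeasurable hY.aemeasurable).mp h,
    Measure.map_apply (hX.prodMk hY) (measurableSet_le measurable_fst measurable_snd)]
  rfl

lemma ProbabilityTheory.iIndepFun.indepFun_of_shift {Ω : Type*} [MeasurableSpace Ω]
    {μ : Measure Ω} {n : ℕ} {X : ℕ → Ω → ℝ} (h : iIndepFun (fun i : Fin n => X (i + 1)) μ)
    {a b : ℕ} (ha : a ∈ Icc 1 n) (hb : b ∈ Icc 1 n) (hab : a ≠ b) :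
    IndepFun (X a) (X b) μ := by
  rw [mem_Icc] at ha hb
  have hindep := h.indepFun (i := ⟨a - 1, by omega⟩) (j := ⟨b - 1, by omega⟩)
    (by simp only [ne_eq, Fin.mk.injEq]; omega)
  simpa [Nat.sub_add_cancel ha.1, Nat.sub_add_cancel hb.1] using hindep

lemma MeasureTheory.integral_sum_sum_ite_le {Ω ι : Type*} [MeasurableSpace Ω] {μ : Measure Ω}
    [IsFiniteMeasure μ] {X : ι → Ω → ℝ} (hX : ∀ i, Measurable (X i)) (J I : Finset ι) {q : ℝ}
    (hq : ∀ j ∈ J, ∀ i ∈ I, μ.real {ω | X i ω ≤ X j ω} = q) :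
    ∫ ω, ∑ j ∈ J, ∑ i ∈ I, (if X i ω ≤ X j ω then (1 : ℝ) else 0) ∂μ = #J * #I * q := by
  have hind : ∀ i j, (fun ω => if X i ω ≤ X j ω then (1 : ℝ) else 0) =
      {ω | X i ω ≤ X j ω}.indicator 1 := fun i j => by ext ω; simp [Set.indicator_apply]
  have hint : ∀ i j, Integrable (fun ω => if X i ω ≤ X j ω then (1 : ℝ) else 0) μ :=
    fun i j => hind i j ▸ (integrable_const 1).indicator (measurableSet_le (hX i) (hX j))
  have hterm : ∀ j ∈ J, ∀ i ∈ I, ∫ ω, (if X i ω ≤ X j ω then (1 : ℝ) else 0) ∂μ = q :=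
    fun j hj i hi => by
      rw [hind, integral_indicator_one (measurableSet_le (hX i) (hX j)), hq j hj i hi]
  rw [integral_finsetSum _ fun j _ => integrable_finsetSum _ fun i _ => hint i j,
    sum_congr rfl fun j hj => by
      rw [integral_finsetSum _ fun i _ => hint i j, sum_congr rfl (hterm j hj)]]
  simp [mul_assoc]

lemma combinedRank_eq_sum {Ω : Type*} (n : ℕ) (X : ℕ → Ω → ℝ) (j : ℕ) (ω : Ω) :
    (combinedRank n X j ω : ℝ) = ∑ i ∈ Icc 1 n, if X i ω ≤ X j ω then 1 else 0 := by
  rw [combinedRank, natCast_card_filter]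

lemma sum_combinedRank_Icc_eq {Ω : Type*} (X : ℕ → Ω → ℝ) (ω : Ω) {n k m : ℕ} (hkm : k ≤ m)
    (hmn : m ≤ n) (hinj : Set.InjOn (fun i => X i ω) (Set.Icc (k + 1) m)) :
    ∑ j ∈ Icc (k + 1) m, (combinedRank n X j ω : ℝ) =
      ((m : ℝ) - k) * ((m - k) + 1) / 2
        + ∑ j ∈ Icc (k + 1) m, ∑ i ∈ Icc (m + 1) n, (if X i ω ≤ X j ω then (1 : ℝ) else 0)
        + ∑ j ∈ Icc (k + 1) m, ∑ i ∈ Icc 1 k, (if X i ω ≤ X j ω then (1 : ℝ) else 0) := by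
  have hself := sum_sum_ite_le_of_injOn (Icc (k + 1) m) (f := fun i => X i ω) (by rwa [coe_Icc])
  rw [Nat.card_Icc, Nat.add_sub_add_right, Nat.cast_sub hkm] at hself
  simp_rw [combinedRank_eq_sum, sum_Icc_one_eq_add_add _ hkm hmn, sum_add_distrib, hself]
  ring

theorem post_change_rank_sum_decomposition_general {Ω : Type*} [MeasureSpace Ω]
    [IsProbabilityMeasure (ℙ : Measure Ω)]
    (n k m : ℕ) (X : ℕ → Ω → ℝ) (F G : Measure ℝ)
    (hmeas : ∀ i, Measurable (X i))
    (hk1 : 1 ≤ k) (hkm : k < m) (hmn : m < n)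
    (hindep : iIndepFun (fun i : Fin n => X (i + 1)) ℙ)
    (hF : ∀ i ∈ Set.Icc 1 k, Measure.map (X i) ℙ = F)
    (hG : ∀ i ∈ Set.Icc (k + 1) n, Measure.map (X i) ℙ = G)
    (hGcont : ∀ x : ℝ, G {x} = 0)
    (hties : ∀ᵐ ω ∂ℙ, Set.InjOn (fun i => X i ω) (Set.Icc 1 n)) :
    -- the two-sample U-statistics with indicator kernels
    (∀ᵐ ω ∂ℙ,
      (∑ j ∈ Finset.Icc (k + 1) m, (combinedRank n X j ω : ℝ)) =
        ((m : ℝ) - k) * (((m : ℝ) - k) + 1) / 2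
          + ((m : ℝ) - k) * ((n : ℝ) - m) *
              ((1 / (((m : ℝ) - k) * ((n : ℝ) - m))) *
                ∑ j ∈ Finset.Icc (k + 1) m, ∑ i ∈ Finset.Icc (m + 1) n,
                  (if X i ω ≤ X j ω then (1 : ℝ) else 0))
          + ((m : ℝ) - k) * (k : ℝ) *
              ((1 / (((m : ℝ) - k) * (k : ℝ))) *
                ∑ j ∈ Finset.Icc (k + 1) m, ∑ i ∈ Finset.Icc 1 k,
                  (if X i ω ≤ X j ω then (1 : ℝ) else 0))) ∧
    (∫ ω, ((1 / (((m : ℝ) - k) * ((n : ℝ) - m))) *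
        ∑ j ∈ Finset.Icc (k + 1) m, ∑ i ∈ Finset.Icc (m + 1) n,
          (if X i ω ≤ X j ω then (1 : ℝ) else 0)) ∂ℙ) = 1 / 2 ∧
    (∫ ω, ((1 / (((m : ℝ) - k) * (k : ℝ))) *
        ∑ j ∈ Finset.Icc (k + 1) m, ∑ i ∈ Finset.Icc 1 k,
          (if X i ω ≤ X j ω then (1 : ℝ) else 0)) ∂ℙ) =
      (ℙ {ω | X 1 ω ≤ X n ω}).toReal := by
  have : IsProbabilityMeasure G :=
    hG n ⟨by omega, le_rfl⟩ ▸ Measure.isProbabilityMeasure_map (hmeas n).aemeasurable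
  have : NullSingletonClass G := ⟨hGcont⟩
  have hlaw : ∀ i ∈ Icc 1 n, ∀ j ∈ Icc 1 n, i ≠ j →
      ℙ {ω | X i ω ≤ X j ω} =
        ((Measure.map (X i) ℙ).prod (Measure.map (X j) ℙ)) {p | p.1 ≤ p.2} :=
    fun i hi j hj hij =>
      (hindep.indepFun_of_shift hi hj hij).measure_le_eq_prod_map (hmeas i) (hmeas j)
  have hmk : (m : ℝ) - k ≠ 0 := sub_ne_zero.mpr (by exact_mod_cast hkm.ne')
  have hnm : (n : ℝ) - m ≠ 0 := sub_ne_zero.mpr (by exact_mod_cast hmn.ne')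
  have hk : (k : ℝ) ≠ 0 := by positivity
  refine ⟨?_, ?_, ?_⟩
  · filter_upwards [hties] with ω hω
    rw [sum_combinedRank_Icc_eq X ω hkm.le hmn.le
      (hω.mono (Set.Icc_subset_Icc (by omega) hmn.le))]
    field_simp
  · rw [integral_const_mul, integral_sum_sum_ite_le hmeas _ _ (q := 1 / 2) fun j hj i hi => ?_]
    · simp [Nat.cast_sub hkm.le, Nat.cast_sub hmn.le]
      field_simp
    · simp only [mem_Icc] at hi hj
      rw [measureReal_def,
        hlaw i (mem_Icc.2 ⟨by omega, by omega⟩) j (mem_Icc.2 ⟨by omega, by omega⟩) (by omega),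
        hG i ⟨by omega, by omega⟩, hG j ⟨by omega, by omega⟩, Measure.prod_self_le_eq_half]
      simp
  · rw [integral_const_mul, integral_sum_sum_ite_le hmeas _ _
      (q := (ℙ : Measure Ω).real {ω | X 1 ω ≤ X n ω}) fun j hj i hi => ?_]
    · simp [Nat.cast_sub hkm.le, measureReal_def]
      field_simp
    · simp only [mem_Icc] at hi hj
      rw [measureReal_def, measureReal_def,
        hlaw i (mem_Icc.2 ⟨by omega, by omega⟩) j (mem_Icc.2 ⟨by omega, by omega⟩) (by omega),
        hlaw 1 (mem_Icc.2 ⟨le_rfl, by omega⟩) n (mem_Icc.2 ⟨by omega, le_rfl⟩) (by omega),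
        hF i ⟨by omega, by omega⟩,
        hF 1 ⟨le_rfl, hk1⟩, hG j ⟨by omega, by omega⟩, hG n ⟨by omega, le_rfl⟩]

/-- U-statistic decomposition of the post-change rank sum `T_m = ∑_{j=k+1}^m R_j`:
`T_m = (m−k)(m−k+1)/2 + (m−k)(n−m) V₁ + (m−k)k V₂`, where `V₁, V₂` are the two-sample
U-statistics with indicator kernels, `E[V₁] = 1/2` and `E[V₂] = p = P(X₁ ≤ Xₙ)`. -/
theorem post_change_rank_sum_decomposition {Ω : Type*} [MeasureSpace Ω]
    [IsProbabilityMeasure (ℙ : Measure Ω)]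
    (n k m : ℕ) (X : ℕ → Ω → ℝ) (F G : Measure ℝ)
    (hmeas : ∀ i, Measurable (X i))
    (hk1 : 1 ≤ k) (hkm : k < m) (hmn : m < n)
    (hindep : iIndepFun (fun i : Fin n => X (i + 1)) ℙ)
    (hF : ∀ i ∈ Set.Icc 1 k, Measure.map (X i) ℙ = F)
    (hG : ∀ i ∈ Set.Icc (k + 1) n, Measure.map (X i) ℙ = G)
    (hFcont : ∀ x : ℝ, F {x} = 0) (hGcont : ∀ x : ℝ, G {x} = 0)
    (hties : ∀ᵐ ω ∂ℙ, Set.InjOn (fun i => X i ω) (Set.Icc 1 n)) :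
    -- the two-sample U-statistics with indicator kernels
    (∀ᵐ ω ∂ℙ,
      (∑ j ∈ Finset.Icc (k + 1) m, (combinedRank n X j ω : ℝ)) =
        ((m : ℝ) - k) * (((m : ℝ) - k) + 1) / 2
          + ((m : ℝ) - k) * ((n : ℝ) - m) *
              ((1 / (((m : ℝ) - k) * ((n : ℝ) - m))) *
                ∑ j ∈ Finset.Icc (k + 1) m, ∑ i ∈ Finset.Icc (m + 1) n,
                  (if X i ω ≤ X j ω then (1 : ℝ) else 0))
          + ((m : ℝ) - k) * (k : ℝ) *
              ((1 / (((m : ℝ) - k) * (k : ℝ))) *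
                ∑ j ∈ Finset.Icc (k + 1) m, ∑ i ∈ Finset.Icc 1 k,
                  (if X i ω ≤ X j ω then (1 : ℝ) else 0))) ∧
    (∫ ω, ((1 / (((m : ℝ) - k) * ((n : ℝ) - m))) *
        ∑ j ∈ Finset.Icc (k + 1) m, ∑ i ∈ Finset.Icc (m + 1) n,
          (if X i ω ≤ X j ω then (1 : ℝ) else 0)) ∂ℙ) = 1 / 2 ∧
    (∫ ω, ((1 / (((m : ℝ) - k) * (k : ℝ))) *
        ∑ j ∈ Finset.Icc (k + 1) m, ∑ i ∈ Finset.Icc 1 k,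
          (if X i ω ≤ X j ω then (1 : ℝ) else 0)) ∂ℙ) =
      (ℙ {ω | X 1 ω ≤ X n ω}).toReal :=
  post_change_rank_sum_decomposition_general n k m X F G hmeas hk1 hkm hmn hindep hF hG hGcont hties
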